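/- arXiv:2506.13662 — 3 statements merged into one kernel-verified Lean document; each statement's English description precedes it below -/
import Mathlib

section
/- Let n ≥ 1 and let P be an n×n real matrix such that all entries of P are nonnegative, each row of P sums to 1, and for all i, j in {1,…,n} there exists k ≥ 1 such that (P^k)(i,j) > 0. Then the kernel of the linear map P − I on ℝ^n (acting on column vectors) has dimension 1. -/
open Matrix Finset

theorem stmt_2 (n : ℕ) (hn : 1 ≤ n) (P : Matrix (Fin n) (Fin n) ℝ)
    (hpos : ∀ i j, 0 ≤ P i j)
    (hrow : ∀ i, ∑ j, P i j = 1)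
    (hirr : ∀ i j, ∃ k : ℕ, 1 ≤ k ∧ 0 < (P ^ k) i j) :
    Module.finrank ℝ (LinearMap.ker (P - 1).mulVecLin) = 1 := by
  haveI : NeZero n := ⟨Nat.one_le_iff_ne_zero.mp hn⟩
  -- powers are nonnegative and row-stochastic
  have hpowpos : ∀ k i j, 0 ≤ (P ^ k) i j := by
    intro k
    induction k with
    | zero =>
      intro i j
      simp only [pow_zero, Matrix.one_apply]
      split <;> norm_num
    | succ k ih =>
      intro i j
      rw [pow_succ, Matrix.mul_apply]
      exact Finset.sum_nonneg fun l _ => mul_nonneg (ih i l) (hpos l j)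
  have hpowrow : ∀ k i, ∑ j, (P ^ k) i j = 1 := by
    intro k
    induction k with
    | zero => intro i; simp [Matrix.one_apply]
    | succ k ih =>
      intro i
      simp only [pow_succ, Matrix.mul_apply]
      rw [Finset.sum_comm]
      calc ∑ l, ∑ j, (P ^ k) i l * P l j
          = ∑ l, (P ^ k) i l * ∑ j, P l j := by
            simp [Finset.mul_sum]
        _ = 1 := by simp only [hrow, mul_one]; exact ih i
  have hones : (fun _ => (1 : ℝ) : Fin n → ℝ) ≠ 0 := by
    intro h
    have := congrFun h ⟨0, hn⟩
    norm_num at this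
  have hker : LinearMap.ker (P - 1).mulVecLin
      = Submodule.span ℝ {(fun _ => (1 : ℝ) : Fin n → ℝ)} := by
    ext x
    simp only [LinearMap.mem_ker, Matrix.mulVecLin_apply, Matrix.sub_mulVec,
      Matrix.one_mulVec, sub_eq_zero, Submodule.mem_span_singleton]
    constructor
    · intro hx
      -- x is a fixed point of P.mulVec; show x is constant
      have hfix : ∀ k, (P ^ k).mulVec x = x := by
        intro k
        induction k with
        | zero => simp
        | succ k ih => rw [pow_succ, ← Matrix.mulVec_mulVec, hx, ih]
      obtain ⟨i₀, hi₀⟩ := Finite.exists_max x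
      refine ⟨x i₀, ?_⟩
      funext j
      simp only [Pi.smul_apply, smul_eq_mul, mul_one]
      by_contra hne
      have hlt : x j < x i₀ := lt_of_le_of_ne (hi₀ j) (Ne.symm hne)
      obtain ⟨k, hk1, hkpos⟩ := hirr i₀ j
      have hsum : ∑ l, (P ^ k) i₀ l * x l = x i₀ := by
        have := congrFun (hfix k) i₀
        simpa [Matrix.mulVec, dotProduct] using this
      have hstrict : ∑ l, (P ^ k) i₀ l * x l < ∑ l, (P ^ k) i₀ l * x i₀ := by
        refine Finset.sum_lt_sum (fun l _ => ?_) ⟨j, Finset.mem_univ j, ?_⟩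
        · exact mul_le_mul_of_nonneg_left (hi₀ l) (hpowpos k i₀ l)
        · exact mul_lt_mul_of_pos_left hlt hkpos
      rw [hsum] at hstrict
      rw [← Finset.sum_mul, hpowrow k i₀, one_mul] at hstrict
      exact lt_irrefl _ hstrict
    · rintro ⟨c, rfl⟩
      funext i
      simp [Matrix.mulVec, dotProduct, ← Finset.mul_sum, hrow i, mul_comm]
  rw [hker, finrank_span_singleton hones]
end

section
/- Let n ≥ 1 and let P be an n×n real matrix such that all entries of P are nonnegative, each row of P sums to 1, and for all i, j in {1,…,n} there exists k ≥ 1 such that (P^k)(i,j) > 0. Then the matrix P − I has rank n − 1. -/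
open Matrix Finset

/-- If `Q` has nonnegative entries, row `i` sums to 1, `x` is fixed by `Q`,
`x i` is maximal, and `Q i j > 0`, then `x j = x i`. -/
lemma aux_max_eq {n : ℕ} (Q : Matrix (Fin n) (Fin n) ℝ)
    (hQ : ∀ a b, 0 ≤ Q a b) (i : Fin n) (hrow : ∑ l, Q i l = 1)
    (x : Fin n → ℝ) (hx : Q.mulVec x = x)
    (hmax : ∀ j, x j ≤ x i) (j : Fin n) (hij : 0 < Q i j) : x j = x i := by
  have h1 : ∑ l, Q i l * x l = x i := congrFun hx i
  have h2 : ∑ l, Q i l * x i = x i := by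
    rw [← Finset.sum_mul, hrow, one_mul]
  have hle : ∀ l ∈ Finset.univ, Q i l * x l ≤ Q i l * x i := fun l _ =>
    mul_le_mul_of_nonneg_left (hmax l) (hQ i l)
  have heq : ∀ l ∈ Finset.univ, Q i l * x l = Q i l * x i := by
    have := (Finset.sum_eq_sum_iff_of_le hle).mp (by rw [h1, h2])
    intro l hl; exact (this l hl)
  have := heq j (Finset.mem_univ j)
  exact mul_left_cancel₀ (ne_of_gt hij) this

theorem stmt_3 (n : ℕ) (hn : 1 ≤ n) (P : Matrix (Fin n) (Fin n) ℝ)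
    (hpos : ∀ i j, 0 ≤ P i j)
    (hrow : ∀ i, ∑ j, P i j = 1)
    (hirr : ∀ i j, ∃ k : ℕ, 1 ≤ k ∧ 0 < (P ^ k) i j) :
    (P - 1).rank = n - 1 := by
  have hne : Nonempty (Fin n) := ⟨⟨0, hn⟩⟩
  -- powers have nonnegative entries
  have hposk : ∀ k : ℕ, 1 ≤ k → ∀ i j, 0 ≤ (P ^ k) i j := by
    intro k hk
    induction k with
    | zero => omega
    | succ m ih =>
      intro i j
      rcases Nat.eq_or_lt_of_le hk with h | h
      · have hm : m = 0 := by omega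
        subst hm
        simpa [pow_one] using hpos i j
      · have hm : 1 ≤ m := by omega
        rw [pow_succ]
        rw [Matrix.mul_apply]
        exact Finset.sum_nonneg fun l _ => mul_nonneg (ih hm i l) (hpos l j)
  -- powers have row-sum 1
  have hrowk : ∀ k : ℕ, ∀ i, ∑ j, (P ^ k) i j = 1 := by
    intro k
    induction k with
    | zero => intro i; simp [Matrix.one_apply]
    | succ m ih =>
      intro i
      rw [pow_succ]
      simp only [Matrix.mul_apply]
      rw [Finset.sum_comm]
      calc ∑ l, ∑ j, (P ^ m) i l * P l j
          = ∑ l, (P ^ m) i l * ∑ j, P l j := by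
            simp [Finset.mul_sum]
        _ = ∑ l, (P ^ m) i l := by simp [hrow]
        _ = 1 := ih i
  -- fixed vectors of P are fixed by powers
  have hfixk : ∀ (x : Fin n → ℝ), P.mulVec x = x → ∀ k : ℕ, (P ^ k).mulVec x = x := by
    intro x hx k
    induction k with
    | zero => simp
    | succ m ih => rw [pow_succ, ← Matrix.mulVec_mulVec, hx, ih]
  -- the kernel of (P - 1).mulVecLin is the span of the all-ones vector
  have hker : LinearMap.ker (P - 1).mulVecLin = Submodule.span ℝ {(fun _ => 1 : Fin n → ℝ)} := by
    apply le_antisymm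
    · intro x hx
      have hx' : P.mulVec x = x := by
        have : (P - 1).mulVec x = 0 := hx
        rw [Matrix.sub_mulVec, Matrix.one_mulVec, sub_eq_zero] at this
        exact this
      -- pick a maximizer
      obtain ⟨i, hi⟩ := Finite.exists_max x
      have hconst : ∀ j, x j = x i := by
        intro j
        obtain ⟨k, hk, hkij⟩ := hirr i j
        exact aux_max_eq (P ^ k) (hposk k hk) i (hrowk k i) x (hfixk x hx' k) hi j hkij
      have : x = (x i) • (fun _ => 1 : Fin n → ℝ) := by
        funext j; simp [hconst j]
      rw [this]
      exact Submodule.smul_mem _ _ (Submodule.mem_span_singleton_self _)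
    · rw [Submodule.span_le, Set.singleton_subset_iff]
      show (P - 1).mulVecLin (fun _ => 1) = 0
      simp only [Matrix.mulVecLin_apply, Matrix.sub_mulVec, Matrix.one_mulVec, sub_eq_zero]
      funext i
      simp [Matrix.mulVec, dotProduct, hrow i]
  -- rank-nullity
  have hones : (fun _ => 1 : Fin n → ℝ) ≠ 0 := by
    intro h
    have := congrFun h ⟨0, hn⟩
    norm_num at this
  have hdimker : Module.finrank ℝ (LinearMap.ker (P - 1).mulVecLin) = 1 := by
    rw [hker, finrank_span_singleton hones]
  have hrn := LinearMap.finrank_range_add_finrank_ker (P - 1).mulVecLin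
  rw [hdimker] at hrn
  have hfr : Module.finrank ℝ (Fin n → ℝ) = n := by simp
  rw [hfr] at hrn
  have : (P - 1).rank = Module.finrank ℝ (LinearMap.range (P - 1).mulVecLin) := rfl
  omega
end

section
/- Let n ≥ 1 and let P be an n×n real matrix such that all entries of P are nonnegative, each row of P sums to 1, and for all i, j in {1,…,n} there exists k ≥ 1 such that (P^k)(i,j) > 0. Then the vector space of all row vectors v ∈ ℝ^n satisfying vP = v is one-dimensional. -/
open Matrix Finset

private lemma pow_entry_nonneg {n : ℕ} (P : Matrix (Fin n) (Fin n) ℝ)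
    (hpos : ∀ i j, 0 ≤ P i j) (k : ℕ) : ∀ i j, 0 ≤ (P ^ k) i j := by
  induction k with
  | zero => intro i j; simp [Matrix.one_apply]; split <;> norm_num
  | succ k ih =>
    intro i j
    rw [pow_succ, Matrix.mul_apply]
    exact Finset.sum_nonneg fun l _ => mul_nonneg (ih i l) (hpos l j)

private lemma abs_fixed {n : ℕ} (P : Matrix (Fin n) (Fin n) ℝ)
    (hpos : ∀ i j, 0 ≤ P i j) (hrow : ∀ i, ∑ j, P i j = 1)
    (v : Fin n → ℝ) (hv : v ᵥ* P = v) :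
    (fun i => |v i|) ᵥ* P = fun i => |v i| := by
  set w : Fin n → ℝ := fun i => |v i| with hw
  have hle : ∀ j, w j ≤ (w ᵥ* P) j := by
    intro j
    have : v j = ∑ i, v i * P i j := by
      conv_lhs => rw [← hv]
      simp [Matrix.vecMul, dotProduct]
    calc w j = |∑ i, v i * P i j| := by rw [hw]; simp only [← this]
    _ ≤ ∑ i, |v i * P i j| := Finset.abs_sum_le_sum_abs _ _
    _ = ∑ i, w i * P i j := by
        refine Finset.sum_congr rfl fun i _ => ?_
        rw [abs_mul, abs_of_nonneg (hpos i j)]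
    _ = (w ᵥ* P) j := by simp [Matrix.vecMul, dotProduct]
  have hsum : ∑ j, (w ᵥ* P) j = ∑ j, w j := by
    simp only [Matrix.vecMul, dotProduct]
    rw [Finset.sum_comm]
    refine Finset.sum_congr rfl fun i _ => ?_
    rw [← Finset.mul_sum, hrow, mul_one]
  have := (Finset.sum_eq_sum_iff_of_le (fun j _ => hle j)).mp hsum.symm
  funext j
  exact (this j (Finset.mem_univ j)).symm

private lemma fixed_pow {n : ℕ} (P : Matrix (Fin n) (Fin n) ℝ)
    (v : Fin n → ℝ) (hv : v ᵥ* P = v) (k : ℕ) : v ᵥ* (P ^ k) = v := by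
  induction k with
  | zero => simp
  | succ k ih => rw [pow_succ, ← Matrix.vecMul_vecMul, ih, hv]

private lemma pos_fixed {n : ℕ} (P : Matrix (Fin n) (Fin n) ℝ)
    (hpos : ∀ i j, 0 ≤ P i j)
    (hirr : ∀ i j, ∃ k : ℕ, 1 ≤ k ∧ 0 < (P ^ k) i j)
    (w : Fin n → ℝ) (hw : w ᵥ* P = w) (hnn : ∀ i, 0 ≤ w i) (hne : w ≠ 0) :
    ∀ j, 0 < w j := by
  obtain ⟨i, hi⟩ : ∃ i, 0 < w i := by
    by_contra h
    push_neg at h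
    exact hne (funext fun i => le_antisymm (h i) (hnn i))
  intro j
  obtain ⟨k, -, hk⟩ := hirr i j
  have hfix := fixed_pow P w hw k
  have : w j = ∑ l, w l * (P ^ k) l j := by
    conv_lhs => rw [← hfix]
    simp [Matrix.vecMul, dotProduct]
  rw [this]
  have hterm : ∀ l ∈ Finset.univ, 0 ≤ w l * (P ^ k) l j :=
    fun l _ => mul_nonneg (hnn l) (pow_entry_nonneg P hpos k l j)
  have := Finset.single_le_sum hterm (Finset.mem_univ i)
  exact lt_of_lt_of_le (mul_pos hi hk) this

theorem stmt_4 (n : ℕ) (hn : 1 ≤ n) (P : Matrix (Fin n) (Fin n) ℝ)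
    (hpos : ∀ i j, 0 ≤ P i j)
    (hrow : ∀ i, ∑ j, P i j = 1)
    (hirr : ∀ i j, ∃ k : ℕ, 1 ≤ k ∧ 0 < (P ^ k) i j)
    (V : Submodule ℝ (Fin n → ℝ)) (hV : ∀ v : Fin n → ℝ, v ∈ V ↔ v ᵥ* P = v) :
    Module.finrank ℝ V = 1 := by
  have i0 : Fin n := ⟨0, hn⟩
  -- Existence of a nonzero fixed vector
  have hdet : (P - 1).det = 0 := by
    rw [← Matrix.exists_mulVec_eq_zero_iff]
    refine ⟨(fun _ => 1), ?_, ?_⟩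
    · intro h
      have := congrFun h i0
      simp at this
    · funext i
      simp [Matrix.sub_mulVec, Matrix.mulVec, dotProduct, hrow i, Matrix.one_apply]
  have hdetT : (P - 1)ᵀ.det = 0 := by rw [Matrix.det_transpose]; exact hdet
  obtain ⟨u, hu0, hu⟩ := (Matrix.exists_mulVec_eq_zero_iff).mpr hdetT
  have hufix : u ᵥ* P = u := by
    rw [Matrix.mulVec_transpose] at hu
    have : u ᵥ* P - u ᵥ* 1 = 0 := by
      rw [← Matrix.vecMul_sub]; exact hu
    rw [Matrix.vecMul_one] at this
    exact sub_eq_zero.mp this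
  -- strictly positive fixed vector w
  set w : Fin n → ℝ := fun i => |u i| with hwdef
  have hwfix : w ᵥ* P = w := abs_fixed P hpos hrow u hufix
  have hwne : w ≠ 0 := by
    intro h
    apply hu0
    funext i
    have := congrFun h i
    simpa [hwdef, abs_eq_zero] using this
  have hwpos : ∀ j, 0 < w j :=
    pos_fixed P hpos hirr w hwfix (fun i => abs_nonneg _) hwne
  have hwV : w ∈ V := (hV w).mpr hwfix
  -- every element of V is a multiple of w
  have hspan : ∀ v ∈ V, v = (v i0 / w i0) • w := by
    intro v hv
    have hvfix := (hV v).mp hv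
    set c : ℝ := v i0 / w i0 with hc
    set z : Fin n → ℝ := v - c • w with hz
    have hzfix : z ᵥ* P = z := by
      rw [hz, Matrix.sub_vecMul, Matrix.smul_vecMul, hvfix, hwfix]
    have hz0 : z i0 = 0 := by
      have hwne0 : w i0 ≠ 0 := (hwpos i0).ne'
      simp [hz, hc, Pi.sub_apply, Pi.smul_apply, smul_eq_mul]
      field_simp
      ring
    have hzz : z = 0 := by
      by_contra hzz
      have hane : (fun i => |z i|) ≠ 0 := by
        intro h
        apply hzz
        funext i
        have := congrFun h i
        simpa [abs_eq_zero] using this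
      have := pos_fixed P hpos hirr (fun i => |z i|)
        (abs_fixed P hpos hrow z hzfix) (fun i => abs_nonneg _) hane i0
      simp [hz0] at this
    have : v - c • w = 0 := hzz
    rw [sub_eq_zero] at this
    exact this
  have hVeq : V = Submodule.span ℝ {w} := by
    apply le_antisymm
    · intro v hv
      rw [hspan v hv]
      exact Submodule.smul_mem _ _ (Submodule.mem_span_singleton_self w)
    · rw [Submodule.span_singleton_le_iff_mem]
      exact hwV
  rw [hVeq]
  exact finrank_span_singleton hwne
end
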